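/- arXiv:2006.11676 — 4 statements merged into one kernel-verified Lean document; each statement's English description precedes it below -/
import Mathlib

section
/- Let N be a positive integer. For each i ∈ {1,…,N} let p_i ∈ [0,1] (the DLT probability of patient i's dose), ρ_i ∈ [0,1] (the patient's weight), f_i ≥ 0 (the density value of the time-to-toxicity at the observed time), b_i ∈ {0,1} (the indicator that patient i's outcome is observed), and for each i with b_i = 1 let y_i ∈ {0,1} be the observed outcome. Then the sum, over all binary imputations (y_i)_{i : b_i = 0} ∈ {0,1}^{#{i : b_i=0}} of the pending outcomes, of the augmented likelihood ∏_{i=1}^N p_i^{1(y_i=1)} (1−p_i)^{1(y_i=0)} f_i^{1(y_i=1, b_i=1)} (1−ρ_i)^{1(y_i=1, b_i=0)} equals the survival likelihood ∏_{i : b_i=1} p_i^{y_i} (1−p_i)^{1−y_i} f_i^{y_i} · ∏_{i : b_i=0} (1 − ρ_i p_i). -/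
/-- Proposition 3.1: marginalizing the augmented (missing-data) likelihood over all
binary imputations of the pending outcomes yields the survival likelihood. -/
theorem stmt_0 (N : ℕ) (hN : 0 < N)
    (p ρ f : Fin N → ℝ)
    (hp : ∀ i, p i ∈ Set.Icc (0:ℝ) 1)
    (hρ : ∀ i, ρ i ∈ Set.Icc (0:ℝ) 1)
    (hf : ∀ i, 0 ≤ f i)
    (b : Fin N → Bool)
    (y : Fin N → Bool) :
    (∑ ymis : {i : Fin N // b i = false} → Bool,
      ∏ i : Fin N,
        (p i ^ (if (if h : b i = false then ymis ⟨i, h⟩ else y i) then 1 else 0 : ℕ) *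
         (1 - p i) ^ (if (if h : b i = false then ymis ⟨i, h⟩ else y i) then 0 else 1 : ℕ) *
         f i ^ (if (if h : b i = false then ymis ⟨i, h⟩ else y i) ∧ b i then 1 else 0 : ℕ) *
         (1 - ρ i) ^ (if (if h : b i = false then ymis ⟨i, h⟩ else y i) ∧ ¬ b i
            then 1 else 0 : ℕ)))
    =
    (∏ i ∈ Finset.univ.filter (fun i => b i = true),
        (p i ^ (if y i then 1 else 0 : ℕ) * (1 - p i) ^ (if y i then 0 else 1 : ℕ) *
         f i ^ (if y i then 1 else 0 : ℕ))) *
    (∏ i ∈ Finset.univ.filter (fun i => b i = false), (1 - ρ i * p i)) := by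
  classical
  have hsplit : ∀ ymis : {i : Fin N // b i = false} → Bool,
      (∏ i : Fin N,
        (p i ^ (if (if h : b i = false then ymis ⟨i, h⟩ else y i) then 1 else 0 : ℕ) *
         (1 - p i) ^ (if (if h : b i = false then ymis ⟨i, h⟩ else y i) then 0 else 1 : ℕ) *
         f i ^ (if (if h : b i = false then ymis ⟨i, h⟩ else y i) ∧ b i then 1 else 0 : ℕ) *
         (1 - ρ i) ^ (if (if h : b i = false then ymis ⟨i, h⟩ else y i) ∧ ¬ b i
            then 1 else 0 : ℕ)))
      =
      (∏ i ∈ Finset.univ.filter (fun i => b i = true),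
        (p i ^ (if y i then 1 else 0 : ℕ) * (1 - p i) ^ (if y i then 0 else 1 : ℕ) *
         f i ^ (if y i then 1 else 0 : ℕ))) *
      (∏ i : {i : Fin N // b i = false},
        (p i.1 ^ (if ymis i then 1 else 0 : ℕ) *
         (1 - p i.1) ^ (if ymis i then 0 else 1 : ℕ) *
         (1 - ρ i.1) ^ (if ymis i then 1 else 0 : ℕ))) := by
    intro ymis
    rw [← Finset.prod_filter_mul_prod_filter_not Finset.univ (fun i => b i = true)]
    congr 1
    · apply Finset.prod_congr rfl
      intro i hi
      simp only [Finset.mem_filter] at hi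
      have hb : b i = true := hi.2
      have hb' : ¬ (b i = false) := by simp [hb]
      simp [hb, hb']
    · simp only [Bool.not_eq_true]
      rw [Finset.prod_subtype (Finset.univ.filter (fun i => b i = false))
        (p := fun i => b i = false) (by simp)
        (fun i => (p i ^ (if (if h : b i = false then ymis ⟨i, h⟩ else y i) then 1 else 0 : ℕ) *
         (1 - p i) ^ (if (if h : b i = false then ymis ⟨i, h⟩ else y i) then 0 else 1 : ℕ) *
         f i ^ (if (if h : b i = false then ymis ⟨i, h⟩ else y i) ∧ b i then 1 else 0 : ℕ) *
         (1 - ρ i) ^ (if ((if h : b i = false then ymis ⟨i, h⟩ else y i) : Bool) ∧ b i = false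
            then 1 else 0 : ℕ)))]
      apply Finset.prod_congr rfl
      intro i _
      have hb : b i.1 = false := i.2
      simp [hb]
  rw [Finset.sum_congr rfl (fun ymis _ => hsplit ymis), ← Finset.mul_sum]
  congr 1
  rw [← Fintype.prod_sum
    (f := fun (i : {i : Fin N // b i = false}) (t : Bool) =>
      p i.1 ^ (if t then 1 else 0 : ℕ) * (1 - p i.1) ^ (if t then 0 else 1 : ℕ) *
      (1 - ρ i.1) ^ (if t then 1 else 0 : ℕ))]
  rw [Finset.prod_subtype (Finset.univ.filter (fun i => b i = false))
      (p := fun i => b i = false) (by simp) (fun i => (1 - ρ i * p i))]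
  apply Finset.prod_congr rfl
  intro i _
  simp [Fintype.sum_bool]
  ring
end

section
/- Let p₀ ∈ (0,1) and let π₀ be a Borel probability measure on [0,1] such that π₀({p : |p − p₀| < ε}) > 0 for every ε > 0. For each N ∈ ℕ let n_N, m_N, r_N be natural numbers with n_N + m_N + r_N = N and let ρ_{N,1},…,ρ_{N,r_N} ∈ [0,1]; define the survival likelihood L_N(p) = p^{n_N} (1−p)^{m_N} ∏_{i=1}^{r_N} (1 − ρ_{N,i} p) for p ∈ [0,1]. If n_N/N → p₀ and r_N/N → 0 as N → ∞, then for every ε > 0, ( ∫_{{p : |p−p₀|<ε}} L_N dπ₀ ) / ( ∫_{[0,1]} L_N dπ₀ ) → 1 as N → ∞. -/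
/-!
Write `H p = p ^ p₀ * (1 - p) ^ (1 - p₀)`. The `N`-th root of `L N p` lies between
`p ^ (n/N) (1 - p) ^ ((m + r)/N)` and `p ^ (n/N) (1 - p) ^ (m/N)`, and both exponent pairs tend
to `(p₀, 1 - p₀)`. By Gibbs' inequality `H` has its strict maximum at `p₀`, so by compactness
`H < v` off the `ε`-ball and `H > w > v` on a small closed `δ`-ball around `p₀`; joint continuity
of `p ^ a (1 - p) ^ b` in `(a, b, p)` (tube lemma) carries both bounds over to `L N ^ (1/N)` for
large `N`. Hence the posterior mass outside the `ε`-ball is at most `v ^ N`, the total mass is at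
least `w ^ N` times the prior mass of the open `δ`-ball, and their ratio decays geometrically.
-/

open MeasureTheory Filter Topology Set

theorem IsCompact.eventually_forall_mem_of_continuousAt {X Y Z : Type*} [TopologicalSpace X]
    [TopologicalSpace Y] [TopologicalSpace Z] {K : Set Y} (hK : IsCompact K) {F : X × Y → Z}
    {x₀ : X} {U : Set Z} (hU : IsOpen U) (hF : ∀ y ∈ K, ContinuousAt F (x₀, y))
    (hFU : ∀ y ∈ K, F (x₀, y) ∈ U) : ∀ᶠ x in 𝓝 x₀, ∀ y ∈ K, F (x, y) ∈ U :=
  hK.eventually_forall_of_forall_eventually fun y hy =>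
    (hF y hy).preimage_mem_nhds (hU.mem_nhds (hFU y hy))

section Concentration

variable {α : Type*} [MeasurableSpace α] {μ : Measure α} [IsFiniteMeasure μ]

theorem setIntegral_compl_le_measureReal_mul {f : α → ℝ} {A : Set α} {c : ℝ}
    (hA : MeasurableSet A) (hf : Integrable f μ) (h : ∀ᵐ x ∂μ, x ∉ A → f x ≤ c) :
    ∫ x in Aᶜ, f x ∂μ ≤ μ.real Aᶜ * c := by
  calc ∫ x in Aᶜ, f x ∂μ ≤ ∫ _ in Aᶜ, c ∂μ :=
        setIntegral_mono_ae_restrict hf.integrableOn (integrableOn_const (measure_ne_top _ _))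
          ((ae_restrict_iff' hA.compl).2 h)
    _ = μ.real Aᶜ * c := by rw [setIntegral_const, smul_eq_mul]

theorem measureReal_mul_le_integral {f : α → ℝ} {B : Set α} {c : ℝ} (hB : MeasurableSet B)
    (hf : Integrable f μ) (hf0 : 0 ≤ᵐ[μ] f) (h : ∀ᵐ x ∂μ, x ∈ B → c ≤ f x) :
    μ.real B * c ≤ ∫ x, f x ∂μ := by
  calc μ.real B * c = ∫ _ in B, c ∂μ := by rw [setIntegral_const, smul_eq_mul]
    _ ≤ ∫ x in B, f x ∂μ :=
        setIntegral_mono_ae_restrict (integrableOn_const (measure_ne_top _ _)) hf.integrableOn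
          ((ae_restrict_iff' hB).2 h)
    _ ≤ ∫ x, f x ∂μ := setIntegral_le_integral hf hf0

theorem tendsto_setIntegral_div_integral_of_exp_gap {f : ℕ → α → ℝ} {A B : Set α} {v w : ℝ}
    (hA : MeasurableSet A) (hB : MeasurableSet B) (hμB : μ B ≠ 0)
    (hf : ∀ N, Integrable (f N) μ) (hf0 : ∀ N, 0 ≤ᵐ[μ] f N) (hv : 0 ≤ v) (hvw : v < w)
    (hup : ∀ᶠ N in atTop, ∀ᵐ x ∂μ, x ∉ A → f N x ≤ v ^ N)
    (hlow : ∀ᶠ N in atTop, ∀ᵐ x ∂μ, x ∈ B → w ^ N ≤ f N x) :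
    Tendsto (fun N => (∫ x in A, f N x ∂μ) / ∫ x, f N x ∂μ) atTop (𝓝 1) := by
  have hw : 0 < w := hv.trans_lt hvw
  have hμB' : 0 < μ.real B := ENNReal.toReal_pos hμB (measure_ne_top _ _)
  set K := fun N => ∫ x in Aᶜ, f N x ∂μ
  set I := fun N => ∫ x, f N x ∂μ
  have hI : ∀ᶠ N in atTop, 0 < I N := by
    filter_upwards [hlow] with N hN
    exact (mul_pos hμB' (pow_pos hw N)).trans_le (measureReal_mul_le_integral hB (hf N) (hf0 N) hN)
  have hKI_le : ∀ᶠ N in atTop, K N / I N ≤ μ.real Aᶜ / μ.real B * (v / w) ^ N := by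
    filter_upwards [hup, hlow, hI] with N hupN hlowN hIN
    rw [div_le_iff₀ hIN]
    calc K N ≤ μ.real Aᶜ * v ^ N := setIntegral_compl_le_measureReal_mul hA (hf N) hupN
      _ = μ.real Aᶜ / μ.real B * (v / w) ^ N * (μ.real B * w ^ N) := by
          rw [div_pow]; field_simp [hw.ne']
      _ ≤ μ.real Aᶜ / μ.real B * (v / w) ^ N * I N := by
          gcongr; exact measureReal_mul_le_integral hB (hf N) (hf0 N) hlowN
  have hKI_nonneg : ∀ᶠ N in atTop, 0 ≤ K N / I N := by
    filter_upwards [hI] with N hIN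
    exact div_nonneg (setIntegral_nonneg_of_ae_restrict (ae_restrict_of_ae (hf0 N))) hIN.le
  have hKI : Tendsto (fun N => K N / I N) atTop (𝓝 0) := by
    refine tendsto_of_tendsto_of_tendsto_of_le_of_le' tendsto_const_nhds ?_ hKI_nonneg hKI_le
    simpa using (tendsto_pow_atTop_nhds_zero_of_lt_one (div_nonneg hv hw.le)
      ((div_lt_one hw).2 hvw)).const_mul (μ.real Aᶜ / μ.real B)
  refine (by simpa using (tendsto_const_nhds (x := (1 : ℝ))).sub hKI :
    Tendsto (fun N => 1 - K N / I N) atTop (𝓝 1)).congr' ?_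
  filter_upwards [hI] with N hIN
  have hsplit := integral_add_compl hA (hf N)
  change 1 - K N / I N = (∫ x in A, f N x ∂μ) / I N
  rw [eq_div_iff hIN.ne', sub_mul, div_mul_cancel₀ _ hIN.ne']
  linarith

end Concentration

theorem tendsto_natCast_div_of_add_eq {k l : ℕ → ℕ} {a : ℝ} (h : ∀ N, k N + l N = N)
    (hk : Tendsto (fun N => (k N : ℝ) / N) atTop (𝓝 a)) :
    Tendsto (fun N => (l N : ℝ) / N) atTop (𝓝 (1 - a)) := by
  refine (tendsto_const_nhds.sub hk).congr' ?_
  filter_upwards [eventually_ne_atTop 0] with N hN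
  have hsum : (k N : ℝ) + l N = N := by exact_mod_cast h N
  field_simp
  linarith

noncomputable def bernoulliRate (a b p : ℝ) : ℝ := p ^ a * (1 - p) ^ b

section BernoulliRate

variable {a b p : ℝ}

theorem bernoulliRate_nonneg (hp : p ∈ Icc (0 : ℝ) 1) : 0 ≤ bernoulliRate a b p :=
  mul_nonneg (Real.rpow_nonneg hp.1 _) (Real.rpow_nonneg (sub_nonneg.2 hp.2) _)

theorem bernoulliRate_natCast_div_pow (hp : p ∈ Icc (0 : ℝ) 1) (k l : ℕ) {N : ℕ} (hN : N ≠ 0) :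
    bernoulliRate (k / N) (l / N) p ^ N = p ^ k * (1 - p) ^ l := by
  have root : ∀ {x : ℝ}, 0 ≤ x → ∀ j : ℕ, (x ^ ((j : ℝ) / N)) ^ N = x ^ j := fun hx j => by
    rw [← Real.rpow_mul_natCast hx, div_mul_cancel₀ _ (Nat.cast_ne_zero.2 hN),
      Real.rpow_natCast]
  rw [bernoulliRate, mul_pow, root hp.1, root (sub_nonneg.2 hp.2)]

theorem continuousAt_bernoulliRate (ha : 0 < a) (hb : 0 < b) :
    ContinuousAt (fun z : (ℝ × ℝ) × ℝ => bernoulliRate z.1.1 z.1.2 z.2) ((a, b), p) :=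
  (continuousAt_snd.rpow (continuous_fst.fst.continuousAt) (Or.inr ha)).mul
    ((continuousAt_const.sub continuousAt_snd).rpow (continuous_fst.snd.continuousAt)
      (Or.inr hb))

theorem continuous_bernoulliRate (ha : 0 ≤ a) (hb : 0 ≤ b) : Continuous (bernoulliRate a b) :=
  (continuous_id.rpow_const fun _ => Or.inr ha).mul
    ((continuous_const.sub continuous_id).rpow_const fun _ => Or.inr hb)

/-- Gibbs' inequality, by weighted AM-GM applied to `q / a` and `(1 - q) / (1 - a)`. -/
theorem bernoulliRate_lt_of_ne (ha₀ : 0 < a) (ha₁ : a < 1) {q : ℝ} (hq : q ∈ Icc (0 : ℝ) 1)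
    (hqa : q ≠ a) : bernoulliRate a (1 - a) q < bernoulliRate a (1 - a) a := by
  have ha₁' : 0 < 1 - a := sub_pos.2 ha₁
  have hne : q / a ≠ (1 - q) / (1 - a) := fun h => hqa <| by
    field_simp at h
    linarith
  have amgm := (Real.geom_mean_lt_arith_mean2_weighted_iff_of_pos ha₀ ha₁'
    (div_nonneg hq.1 ha₀.le) (div_nonneg (sub_nonneg.2 hq.2) ha₁'.le) (by ring)).2 hne
  rw [Real.div_rpow hq.1 ha₀.le, Real.div_rpow (sub_nonneg.2 hq.2) ha₁'.le,
    mul_div_cancel₀ _ ha₀.ne', mul_div_cancel₀ _ ha₁'.ne', add_sub_cancel, div_mul_div_comm,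
    div_lt_one (mul_pos (Real.rpow_pos_of_pos ha₀ _) (Real.rpow_pos_of_pos ha₁' _))] at amgm
  exact amgm

theorem exists_bernoulliRate_gap {p₀ ε : ℝ} (hp₀ : p₀ ∈ Ioo (0 : ℝ) 1) (hε : 0 < ε) :
    ∃ v w δ : ℝ, 0 ≤ v ∧ v < w ∧ 0 < δ ∧ Metric.closedBall p₀ δ ⊆ Icc 0 1 ∧
      (∀ p ∈ Metric.closedBall p₀ δ, w < bernoulliRate p₀ (1 - p₀) p) ∧
      ∀ p ∈ Icc 0 1 \ Metric.ball p₀ ε, bernoulliRate p₀ (1 - p₀) p < v := by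
  obtain ⟨hp₀0, hp₀1⟩ := hp₀
  have hq₀ : 0 < 1 - p₀ := sub_pos.2 hp₀1
  have hM : 0 < bernoulliRate p₀ (1 - p₀) p₀ :=
    mul_pos (Real.rpow_pos_of_pos hp₀0 _) (Real.rpow_pos_of_pos hq₀ _)
  have hcont := continuous_bernoulliRate hp₀0.le hq₀.le
  obtain ⟨c, hcM, hc⟩ : ∃ c < bernoulliRate p₀ (1 - p₀) p₀,
      ∀ p ∈ Icc 0 1 \ Metric.ball p₀ ε, bernoulliRate p₀ (1 - p₀) p ≤ c :=
    (isCompact_Icc.diff Metric.isOpen_ball).exists_forall_le' (α := ℝᵒᵈ) hcont.continuousOn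
      fun p hp => bernoulliRate_lt_of_ne hp₀0 hp₀1 hp.1 fun h => hp.2 (h ▸ Metric.mem_ball_self hε)
  obtain ⟨v, hcv, hvM⟩ := exists_between (max_lt hcM hM)
  obtain ⟨w, hvw, hwM⟩ := exists_between hvM
  obtain ⟨δ, hδ, hδK⟩ : ∃ δ > 0, ∀ ⦃p⦄, p ∈ Metric.closedBall p₀ δ →
      p ∈ Icc (0 : ℝ) 1 ∧ w < bernoulliRate p₀ (1 - p₀) p :=
    Metric.nhds_basis_closedBall.eventually_iff.1 <|
      (show ∀ᶠ p in 𝓝 p₀, p ∈ Icc (0 : ℝ) 1 from Icc_mem_nhds hp₀0 hp₀1).and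
        (hcont.continuousAt.eventually (lt_mem_nhds hwM))
  exact ⟨v, w, δ, (le_max_right _ _).trans hcv.le, hvw, hδ, fun p hp => (hδK hp).1,
    fun p hp => (hδK hp).2, fun p hp => (hc p hp).trans_lt ((le_max_left _ _).trans_lt hcv)⟩

variable {K : Set ℝ} {k l : ℕ → ℕ}

theorem eventually_forall_pow_mul_pow_le (hK : IsCompact K) (hK01 : K ⊆ Icc 0 1) (ha : 0 < a)
    (hb : 0 < b) {v : ℝ} (hv : ∀ p ∈ K, bernoulliRate a b p < v)
    (hk : Tendsto (fun N => (k N : ℝ) / N) atTop (𝓝 a))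
    (hl : Tendsto (fun N => (l N : ℝ) / N) atTop (𝓝 b)) :
    ∀ᶠ N in atTop, ∀ p ∈ K, p ^ k N * (1 - p) ^ l N ≤ v ^ N := by
  have tube := hK.eventually_forall_mem_of_continuousAt isOpen_Iio
    (fun p _ => continuousAt_bernoulliRate ha hb) hv
  filter_upwards [(hk.prodMk_nhds hl).eventually tube, eventually_ne_atTop 0] with N hN hN0 p hp
  rw [← bernoulliRate_natCast_div_pow (hK01 hp) _ _ hN0]
  exact pow_le_pow_left₀ (bernoulliRate_nonneg (hK01 hp)) (hN p hp).le N

theorem eventually_forall_le_pow_mul_pow (hK : IsCompact K) (hK01 : K ⊆ Icc 0 1) (ha : 0 < a)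
    (hb : 0 < b) {w : ℝ} (hw : 0 ≤ w) (hw' : ∀ p ∈ K, w < bernoulliRate a b p)
    (hk : Tendsto (fun N => (k N : ℝ) / N) atTop (𝓝 a))
    (hl : Tendsto (fun N => (l N : ℝ) / N) atTop (𝓝 b)) :
    ∀ᶠ N in atTop, ∀ p ∈ K, w ^ N ≤ p ^ k N * (1 - p) ^ l N := by
  have tube := hK.eventually_forall_mem_of_continuousAt isOpen_Ioi
    (fun p _ => continuousAt_bernoulliRate ha hb) hw'
  filter_upwards [(hk.prodMk_nhds hl).eventually tube, eventually_ne_atTop 0] with N hN hN0 p hp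
  rw [← bernoulliRate_natCast_div_pow (hK01 hp) _ _ hN0]
  exact pow_le_pow_left₀ hw (hN p hp).le N

end BernoulliRate

section SurvivalLikelihood

variable {ι : Type*} [Fintype ι] {ρ : ι → ℝ} {p : ℝ}

noncomputable def survivalLikelihood (k l : ℕ) (ρ : ι → ℝ) (p : ℝ) : ℝ :=
  p ^ k * (1 - p) ^ l * ∏ i, (1 - ρ i * p)

theorem continuous_survivalLikelihood (k l : ℕ) (ρ : ι → ℝ) :
    Continuous (survivalLikelihood k l ρ) := by
  unfold survivalLikelihood
  fun_prop

theorem prod_one_sub_mul_mem_Icc (hρ : ∀ i, ρ i ∈ Icc (0 : ℝ) 1) (hp : p ∈ Icc (0 : ℝ) 1) :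
    (1 - p) ^ Fintype.card ι ≤ ∏ i, (1 - ρ i * p) ∧ ∏ i, (1 - ρ i * p) ≤ 1 := by
  have hle : ∀ i, 1 - p ≤ 1 - ρ i * p := fun i => by nlinarith [(hρ i).2, hp.1]
  refine ⟨?_, Finset.prod_le_one (fun i _ => (sub_nonneg.2 hp.2).trans (hle i)) fun i _ => ?_⟩
  · rw [← Finset.card_univ, ← Finset.prod_const]
    exact Finset.prod_le_prod (fun _ _ => sub_nonneg.2 hp.2) fun i _ => hle i
  · nlinarith [(hρ i).1, hp.1]

variable (k l : ℕ)

theorem survivalLikelihood_nonneg (hρ : ∀ i, ρ i ∈ Icc (0 : ℝ) 1) (hp : p ∈ Icc (0 : ℝ) 1) :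
    0 ≤ survivalLikelihood k l ρ p :=
  mul_nonneg (mul_nonneg (pow_nonneg hp.1 _) (pow_nonneg (sub_nonneg.2 hp.2) _))
    ((pow_nonneg (sub_nonneg.2 hp.2) _).trans (prod_one_sub_mul_mem_Icc hρ hp).1)

theorem survivalLikelihood_le (hρ : ∀ i, ρ i ∈ Icc (0 : ℝ) 1) (hp : p ∈ Icc (0 : ℝ) 1) :
    survivalLikelihood k l ρ p ≤ p ^ k * (1 - p) ^ l :=
  mul_le_of_le_one_right (mul_nonneg (pow_nonneg hp.1 _) (pow_nonneg (sub_nonneg.2 hp.2) _))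
    (prod_one_sub_mul_mem_Icc hρ hp).2

theorem le_survivalLikelihood (hρ : ∀ i, ρ i ∈ Icc (0 : ℝ) 1) (hp : p ∈ Icc (0 : ℝ) 1) :
    p ^ k * (1 - p) ^ (l + Fintype.card ι) ≤ survivalLikelihood k l ρ p := by
  rw [pow_add, ← mul_assoc]
  exact mul_le_mul_of_nonneg_left (prod_one_sub_mul_mem_Icc hρ hp).1
    (mul_nonneg (pow_nonneg hp.1 _) (pow_nonneg (sub_nonneg.2 hp.2) _))

end SurvivalLikelihood

/-- Deterministic core of Lemma 5.1(1): posterior consistency of the toxicity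
probability under the survival likelihood when the fraction of pending outcomes
vanishes. -/
theorem stmt_5 (p₀ : ℝ) (hp₀ : p₀ ∈ Set.Ioo (0:ℝ) 1)
    (π₀ : Measure ℝ) [IsProbabilityMeasure π₀]
    (hπ₀_supp : π₀ (Set.Icc (0:ℝ) 1)ᶜ = 0)
    (hπ₀_pos : ∀ ε > 0, 0 < π₀ {p : ℝ | |p - p₀| < ε})
    (n m r : ℕ → ℕ) (hsum : ∀ N, n N + m N + r N = N)
    (ρ : (N : ℕ) → Fin (r N) → ℝ) (hρ : ∀ N i, ρ N i ∈ Set.Icc (0:ℝ) 1)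
    (L : ℕ → ℝ → ℝ)
    (hL : ∀ N p, L N p = p ^ n N * (1 - p) ^ m N * ∏ i, (1 - ρ N i * p))
    (hn : Tendsto (fun N => (n N : ℝ) / N) atTop (nhds p₀))
    (hr : Tendsto (fun N => (r N : ℝ) / N) atTop (nhds 0)) :
    ∀ ε > 0, Tendsto (fun N =>
        (∫ p in {p : ℝ | |p - p₀| < ε}, L N p ∂π₀) /
          (∫ p in Set.Icc (0:ℝ) 1, L N p ∂π₀))
      atTop (nhds 1) := by
  intro ε hε
  obtain ⟨v, w, δ, hv, hvw, hδ, hK01, hK, hC⟩ := exists_bernoulliRate_gap hp₀ hε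
  have hq₀ : 0 < 1 - p₀ := sub_pos.2 hp₀.2
  have hL' : ∀ N, L N = survivalLikelihood (n N) (m N) (ρ N) := fun N => funext (hL N)
  have hae : ∀ᵐ p ∂π₀, p ∈ Icc (0 : ℝ) 1 := ae_iff.2 hπ₀_supp
  have hrestrict : π₀.restrict (Icc 0 1) = π₀ := Measure.restrict_eq_self_of_ae_mem hae
  have hm : Tendsto (fun N => (m N : ℝ) / N) atTop (𝓝 (1 - p₀)) :=
    add_zero p₀ ▸ tendsto_natCast_div_of_add_eq (k := fun N => n N + r N)
      (fun N => by have := hsum N; omega) (by simpa only [Nat.cast_add, add_div] using hn.add hr)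
  have hmr : Tendsto (fun N => ((m N + r N : ℕ) : ℝ) / N) atTop (𝓝 (1 - p₀)) :=
    tendsto_natCast_div_of_add_eq (fun N => by have := hsum N; omega) hn
  refine (tendsto_setIntegral_div_integral_of_exp_gap (f := L) (A := Metric.ball p₀ ε)
    Metric.isOpen_ball.measurableSet Metric.isOpen_ball.measurableSet (hπ₀_pos δ hδ).ne'
    (fun N => ?_) (fun N => ?_) hv hvw ?_ ?_).congr fun N => by rw [hrestrict]; rfl
  · rw [hL', ← hrestrict]
    exact (continuous_survivalLikelihood _ _ _).continuousOn.integrableOn_compact isCompact_Icc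
  · filter_upwards [hae] with p hp
    exact hL' N ▸ survivalLikelihood_nonneg _ _ (hρ N) hp
  · filter_upwards [eventually_forall_pow_mul_pow_le (isCompact_Icc.diff Metric.isOpen_ball)
      sdiff_subset hp₀.1 hq₀ hC hn hm] with N hN
    filter_upwards [hae] with p hp hpA
    exact hL' N ▸ (survivalLikelihood_le _ _ (hρ N) hp).trans (hN p ⟨hp, hpA⟩)
  · filter_upwards [eventually_forall_le_pow_mul_pow (isCompact_closedBall p₀ δ) hK01 hp₀.1 hq₀
      (hv.trans hvw.le) hK hn hmr] with N hN
    refine ae_of_all _ fun p hp => ?_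
    have hpK := Metric.ball_subset_closedBall hp
    refine hL' N ▸ (hN p hpK).trans ?_
    simpa only [Fintype.card_fin] using le_survivalLikelihood _ _ (hρ N) (hK01 hpK)
end

section
/- On a probability space, let (Y_i)_{i ∈ ℕ} be independent and identically distributed Bernoulli random variables with success probability p₀ ∈ (0,1). For each N ∈ ℕ and each i ≤ N let b_{N,i} : Ω → {0,1} be random pending-status indicators satisfying (1/N)·Σ_{i≤N} (1 − b_{N,i}) → 0 almost surely, and let ρ_{N,i} ∈ [0,1] be constants. Let π₀ be a Borel probability measure on [0,1] with π₀({p : |p − p₀| < ε}) > 0 for every ε > 0, and define the random survival likelihood L_N(p) = ∏_{i≤N} [ p^{Y_i} (1−p)^{1−Y_i} ]^{b_{N,i}} · (1 − ρ_{N,i} p)^{1 − b_{N,i}}. Then almost surely, for every ε > 0, the posterior probability ( ∫_{{p : |p−p₀|<ε}} L_N dπ₀ ) / ( ∫_{[0,1]} L_N dπ₀ ) converges to 1 as N → ∞. -/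
/-!
Fix an outcome path ω in the almost-sure event where the strong law holds for the DLT indicators
and the pending fraction vanishes. With `a`, `b`, `u` the numbers of assessed toxic, assessed
non-toxic and pending patients, `a/N → p₀`, `b/N → 1 - p₀`, `u/N → 0`, and on `[0, 1]` the
survival likelihood is squeezed between `p^a (1-p)^(b+u)` and `p^a (1-p)^b`, because
`1 - p ≤ 1 - ρ p ≤ 1`.

With `q = a/(a+b)`, `p^a (1-p)^b = exp ((a+b) (q log p + (1-q) log (1-p)))`. The bound
`log (1-t) ≤ -t - t²/2` shows that this is at most its maximum times `exp (-(a+b)(p-q)²/2)`,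
so it is exponentially small (in `N`) away from `p₀` relative to its maximum, while by continuity
it is within a factor `exp (-(a+b)η)` of the maximum on a small ball around `p₀`, which has
positive prior mass. The extra factor `(1-p)^u` costs only `exp (o(N))` on that ball.
-/

open MeasureTheory Filter Real Topology ProbabilityTheory
open scoped Finset

lemma log_one_sub_le_neg_sub_sq_div_two {t : ℝ} (h0 : 0 ≤ t) (h1 : t < 1) :
    log (1 - t) ≤ -t - t ^ 2 / 2 := by
  have h := sum_le_hasSum (Finset.range 2) (fun i _ => by positivity)
    (hasSum_pow_div_log_of_abs_lt_one (by rwa [abs_of_nonneg h0]))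
  norm_num [Finset.sum_range_succ] at h
  linarith

noncomputable def bernoulliLogLik (q p : ℝ) : ℝ := q * log p + (1 - q) * log (1 - p)

lemma bernoulliLogLik_one_sub (q p : ℝ) :
    bernoulliLogLik (1 - q) (1 - p) = bernoulliLogLik q p := by
  simp only [bernoulliLogLik, sub_sub_cancel]
  ring

lemma bernoulliLogLik_le_of_le {p q : ℝ} (hp : 0 < p) (hpq : p ≤ q) (hq : q < 1) :
    bernoulliLogLik q p ≤ bernoulliLogLik q q - (p - q) ^ 2 / 2 := by
  have hq0 : 0 < q := hp.trans_le hpq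
  have h1q : 0 < 1 - q := by linarith
  have hlog_p : log p - log q ≤ -((q - p) / q) - ((q - p) / q) ^ 2 / 2 := by
    have h := log_one_sub_le_neg_sub_sq_div_two (t := (q - p) / q) (by positivity)
      (by rw [div_lt_one hq0]; linarith)
    rwa [show 1 - (q - p) / q = p / q by field_simp; ring, log_div hp.ne' hq0.ne'] at h
  have hlog_one_sub_p : log (1 - p) - log (1 - q) ≤ (1 - p) / (1 - q) - 1 := by
    rw [← log_div (by linarith) h1q.ne']
    exact log_le_sub_one_of_pos (div_pos (by linarith) h1q)
  have hp_part : q * (log p - log q) ≤ -(q - p) - (q - p) ^ 2 / (2 * q) := by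
    calc q * (log p - log q) ≤ q * (-((q - p) / q) - ((q - p) / q) ^ 2 / 2) :=
          mul_le_mul_of_nonneg_left hlog_p hq0.le
      _ = -(q - p) - (q - p) ^ 2 / (2 * q) := by field_simp
  have hq_part : (1 - q) * (log (1 - p) - log (1 - q)) ≤ q - p := by
    calc (1 - q) * (log (1 - p) - log (1 - q)) ≤ (1 - q) * ((1 - p) / (1 - q) - 1) :=
          mul_le_mul_of_nonneg_left hlog_one_sub_p h1q.le
      _ = q - p := by field_simp; ring
  have hsq : (p - q) ^ 2 / 2 ≤ (q - p) ^ 2 / (2 * q) := by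
    rw [div_le_div_iff₀ two_pos (by positivity)]
    nlinarith [sq_nonneg (p - q)]
  unfold bernoulliLogLik
  linarith

lemma bernoulliLogLik_le {p q : ℝ} (hp : p ∈ Set.Ioo 0 1) (hq : q ∈ Set.Ioo 0 1) :
    bernoulliLogLik q p ≤ bernoulliLogLik q q - (p - q) ^ 2 / 2 := by
  rcases le_total p q with hpq | hqp
  · exact bernoulliLogLik_le_of_le hp.1 hpq hq.2
  · have h := bernoulliLogLik_le_of_le (p := 1 - p) (q := 1 - q) (by linarith [hp.2])
      (by linarith) (by linarith [hq.1])
    rwa [bernoulliLogLik_one_sub, bernoulliLogLik_one_sub,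
      show (1 - p - (1 - q)) ^ 2 = (p - q) ^ 2 by ring] at h

lemma eventually_bernoulliLogLik_diag_sub_lt {p₀ η : ℝ} (hp₀ : p₀ ∈ Set.Ioo 0 1) (hη : 0 < η) :
    ∀ᶠ x : ℝ × ℝ in 𝓝 (p₀, p₀), bernoulliLogLik x.1 x.1 - η < bernoulliLogLik x.1 x.2 := by
  have hcont : ∀ f : ℝ × ℝ → ℝ, ContinuousAt f (p₀, p₀) → f (p₀, p₀) = p₀ →
      ContinuousAt (fun x => bernoulliLogLik x.1 (f x)) (p₀, p₀) := by
    intro f hf hf₀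
    unfold bernoulliLogLik
    have h1 : f (p₀, p₀) ≠ 0 := by rw [hf₀]; exact hp₀.1.ne'
    have h2 : 1 - f (p₀, p₀) ≠ 0 := by rw [hf₀]; linarith [hp₀.2]
    exact (continuousAt_fst.mul (hf.log h1)).add
      ((continuousAt_const.sub continuousAt_fst).mul ((continuousAt_const.sub hf).log h2))
  exact ContinuousAt.eventually_lt ((hcont _ continuousAt_fst rfl).sub continuousAt_const)
    (hcont _ continuousAt_snd rfl) (sub_lt_self _ hη)

lemma pow_mul_one_sub_pow_eq_exp {a b : ℕ} (hab : a + b ≠ 0) {p : ℝ} (hp : p ∈ Set.Ioo 0 1) :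
    p ^ a * (1 - p) ^ b = exp ((a + b) * bernoulliLogLik (a / (a + b)) p) := by
  have hab' : (a + b : ℝ) ≠ 0 := by exact_mod_cast hab
  have h1p : 0 < 1 - p := by linarith [hp.2]
  rw [show p ^ a = exp (a * log p) by rw [exp_nat_mul, exp_log hp.1],
    show (1 - p) ^ b = exp (b * log (1 - p)) by rw [exp_nat_mul, exp_log h1p], ← exp_add]
  congr 1
  unfold bernoulliLogLik
  field_simp
  ring

lemma pow_mul_one_sub_pow_nonneg (a b : ℕ) {p : ℝ} (hp : p ∈ Set.Icc 0 1) :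
    0 ≤ p ^ a * (1 - p) ^ b :=
  mul_nonneg (pow_nonneg hp.1 _) (pow_nonneg (sub_nonneg.2 hp.2) _)

lemma div_add_mem_Ioo {a b : ℕ} (ha : a ≠ 0) (hb : b ≠ 0) :
    (a / (a + b) : ℝ) ∈ Set.Ioo 0 1 := by
  have ha' : (0 : ℝ) < a := by positivity
  have hb' : (0 : ℝ) < b := by positivity
  exact ⟨by positivity, by rw [div_lt_one (by positivity)]; linarith⟩

lemma pow_mul_one_sub_pow_le {a b : ℕ} (ha : a ≠ 0) (hb : b ≠ 0) {p : ℝ}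
    (hp : p ∈ Set.Icc 0 1) :
    p ^ a * (1 - p) ^ b ≤ (a / (a + b) : ℝ) ^ a * (1 - a / (a + b)) ^ b *
      exp (-((a + b) * ((p - a / (a + b)) ^ 2 / 2))) := by
  have hq := div_add_mem_Ioo ha hb
  have hM : 0 ≤ (a / (a + b) : ℝ) ^ a * (1 - a / (a + b)) ^ b *
      exp (-((a + b) * ((p - a / (a + b)) ^ 2 / 2))) :=
    mul_nonneg (pow_mul_one_sub_pow_nonneg a b (Set.Ioo_subset_Icc_self hq)) (exp_pos _).le
  rcases hp.1.eq_or_lt with rfl | hp0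
  · simpa [zero_pow ha] using hM
  rcases hp.2.eq_or_lt with rfl | hp1
  · simpa [zero_pow hb] using hM
  rw [pow_mul_one_sub_pow_eq_exp (by omega) ⟨hp0, hp1⟩, pow_mul_one_sub_pow_eq_exp (by omega) hq,
    ← exp_add]
  gcongr
  have := mul_le_mul_of_nonneg_left (bernoulliLogLik_le ⟨hp0, hp1⟩ hq)
    (by positivity : (0 : ℝ) ≤ a + b)
  linarith

lemma mul_exp_le_pow_mul_one_sub_pow {a b : ℕ} (ha : a ≠ 0) (hb : b ≠ 0) {p η : ℝ}
    (hp : p ∈ Set.Ioo 0 1)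
    (hη : bernoulliLogLik (a / (a + b)) (a / (a + b)) - η < bernoulliLogLik (a / (a + b)) p) :
    (a / (a + b) : ℝ) ^ a * (1 - a / (a + b)) ^ b * exp (-((a + b) * η)) ≤
      p ^ a * (1 - p) ^ b := by
  rw [pow_mul_one_sub_pow_eq_exp (by omega) hp,
    pow_mul_one_sub_pow_eq_exp (by omega) (div_add_mem_Ioo ha hb), ← exp_add]
  gcongr
  have := mul_le_mul_of_nonneg_left hη.le (by positivity : (0 : ℝ) ≤ a + b)
  linarith

lemma exists_mul_exp_le_pow_mul_one_sub_pow {p₀ η : ℝ} (hp₀ : p₀ ∈ Set.Ioo 0 1) (hη : 0 < η) :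
    ∃ r > 0, ∀ ⦃a b : ℕ⦄ (u : ℕ), a ≠ 0 → b ≠ 0 → |(a / (a + b) : ℝ) - p₀| < r → ∀ ⦃p : ℝ⦄,
      |p - p₀| < r → p ∈ Set.Icc 0 1 ∧
        ((1 - p₀) / 2) ^ u * ((a / (a + b) : ℝ) ^ a * (1 - a / (a + b)) ^ b *
          exp (-((a + b) * η))) ≤ p ^ a * (1 - p) ^ (b + u) := by
  obtain ⟨r, hr, hnear⟩ :=
    Metric.eventually_nhds_iff.1 (eventually_bernoulliLogLik_diag_sub_lt hp₀ hη)
  refine ⟨min r (min p₀ ((1 - p₀) / 2)), by simp [hr, hp₀.1, hp₀.2],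
    fun a b u ha hb hq p hp => ?_⟩
  simp only [lt_min_iff] at hq hp
  obtain ⟨hp₀r, hp₀p, hp₀q⟩ := hp
  have hp₀p' := abs_lt.1 hp₀p
  have hp₀q' := abs_lt.1 hp₀q
  have hcp : (1 - p₀) / 2 ≤ 1 - p := by linarith
  have hp01 : p ∈ Set.Ioo 0 1 := ⟨by linarith, by linarith⟩
  have hF := hnear (y := ((a / (a + b) : ℝ), p)) (by
    rw [Prod.dist_eq, Real.dist_eq, Real.dist_eq]
    exact max_lt hq.1 hp₀r)
  refine ⟨Set.Ioo_subset_Icc_self hp01, ?_⟩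
  calc _ ≤ (1 - p) ^ u * (p ^ a * (1 - p) ^ b) :=
        mul_le_mul (pow_le_pow_left₀ (by linarith) hcp _)
          (mul_exp_le_pow_mul_one_sub_pow ha hb hp01 hF)
          (mul_nonneg (pow_mul_one_sub_pow_nonneg a b
            (Set.Ioo_subset_Icc_self (div_add_mem_Ioo ha hb))) (exp_pos _).le)
          (pow_nonneg (by linarith) _)
    _ = p ^ a * (1 - p) ^ (b + u) := by ring

lemma pow_mul_one_sub_pow_le_of_le_abs_sub {a b : ℕ} (ha : a ≠ 0) (hb : b ≠ 0) {p p₀ ε : ℝ}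
    (hp : p ∈ Set.Icc 0 1) (hq : |(a / (a + b) : ℝ) - p₀| ≤ ε / 2) (hpp₀ : ε ≤ |p - p₀|) :
    p ^ a * (1 - p) ^ b ≤
      (a / (a + b) : ℝ) ^ a * (1 - a / (a + b)) ^ b * exp (-((a + b) * (ε ^ 2 / 8))) := by
  have hpq : ε / 2 ≤ |p - a / (a + b)| := by
    linarith [abs_sub_le p (a / (a + b)) p₀]
  have hsq : ε ^ 2 / 8 ≤ (p - a / (a + b)) ^ 2 / 2 := by
    nlinarith [pow_le_pow_left₀ (by linarith [abs_nonneg ((a / (a + b) : ℝ) - p₀)]) hpq 2,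
      sq_abs (p - a / (a + b))]
  refine (pow_mul_one_sub_pow_le ha hb hp).trans ?_
  have := pow_mul_one_sub_pow_nonneg a b (Set.Ioo_subset_Icc_self (div_add_mem_Ioo ha hb))
  gcongr

lemma tendsto_setIntegral_div_integral_of_le_mul {α : Type*} [MeasurableSpace α]
    {μ : Measure α} [IsFiniteMeasure μ] {A B : Set α} (hA : MeasurableSet A)
    (hB : MeasurableSet B) (hBA : B ⊆ A) (hμB : μ B ≠ 0) {f : ℕ → α → ℝ}
    (hf : ∀ N, Integrable (f N) μ) (hf₀ : ∀ N, 0 ≤ᵐ[μ] f N) {l κ : ℕ → ℝ}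
    (hbounds : ∀ᶠ N in atTop, 0 < l N ∧ (∀ x ∈ B, l N ≤ f N x) ∧
      ∀ᵐ x ∂μ, x ∉ A → f N x ≤ κ N * l N)
    (hκ : Tendsto κ atTop (𝓝 0)) :
    Tendsto (fun N => (∫ x in A, f N x ∂μ) / ∫ x, f N x ∂μ) atTop (𝓝 1) := by
  have hμB' : 0 < μ.real B := ENNReal.toReal_pos hμB (measure_ne_top _ _)
  have hlim : Tendsto (fun N => 1 - κ N * (μ.real Aᶜ / μ.real B)) atTop (𝓝 1) := by
    simpa using tendsto_const_nhds.sub (hκ.mul_const (μ.real Aᶜ / μ.real B))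
  have hratio : ∀ᶠ N in atTop,
      1 - κ N * (μ.real Aᶜ / μ.real B) ≤ (∫ x in A, f N x ∂μ) / ∫ x, f N x ∂μ ∧
        (∫ x in A, f N x ∂μ) / ∫ x, f N x ∂μ ≤ 1 := by
    filter_upwards [hbounds] with N ⟨hl, hlB, hlAc⟩
    set I := ∫ x in A, f N x ∂μ
    set J := ∫ x in Aᶜ, f N x ∂μ
    have hI : l N * μ.real B ≤ I :=
      calc l N * μ.real B ≤ ∫ x in B, f N x ∂μ := by
            rw [mul_comm]
            exact setIntegral_ge_of_const_le hB (measure_ne_top _ _) hlB (hf N).integrableOn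
        _ ≤ I := setIntegral_mono_set (hf N).integrableOn
            (ae_restrict_of_ae (hf₀ N)) hBA.eventuallyLE
    have hIpos : 0 < I := (mul_pos hl hμB').trans_le hI
    have hJ₀ : 0 ≤ J := setIntegral_nonneg_of_ae_restrict (ae_restrict_of_ae (hf₀ N))
    have hJ : J ≤ κ N * l N * μ.real Aᶜ := by
      have h := setIntegral_mono_ae_restrict (hf N).integrableOn
        (integrableOn_const (C := κ N * l N) (measure_ne_top _ _))
        ((ae_restrict_iff' hA.compl).2 hlAc)
      rwa [setIntegral_const, smul_eq_mul, mul_comm] at h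
    have hJI : J / (I + J) ≤ κ N * (μ.real Aᶜ / μ.real B) :=
      calc J / (I + J) ≤ J / I := div_le_div_of_nonneg_left hJ₀ hIpos (by linarith)
        _ ≤ κ N * l N * μ.real Aᶜ / (l N * μ.real B) :=
            div_le_div₀ (hJ₀.trans hJ) hJ (mul_pos hl hμB') hI
        _ = κ N * (μ.real Aᶜ / μ.real B) := by field_simp
    rw [← integral_add_compl hA (hf N), div_le_one (by positivity)]
    refine ⟨?_, by linarith⟩
    rw [show I / (I + J) = 1 - J / (I + J) by field_simp; ring]
    linarith
  exact tendsto_of_tendsto_of_tendsto_of_le_of_le' hlim tendsto_const_nhds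
    (hratio.mono fun _ h => h.1) (hratio.mono fun _ h => h.2)

lemma tendsto_atTop_of_tendsto_div_natCast {x : ℕ → ℝ} {L : ℝ} (hL : 0 < L)
    (hx : Tendsto (fun N => x N / N) atTop (𝓝 L)) : Tendsto x atTop atTop := by
  refine (tendsto_natCast_atTop_atTop.atTop_mul_pos hL hx).congr' ?_
  filter_upwards [eventually_ne_atTop 0] with N hN
  field_simp

section BinomialSandwich

variable {p₀ : ℝ} {a b u : ℕ → ℕ}

lemma eventually_ne_zero_and_abs_sub_lt (hp₀ : p₀ ∈ Set.Ioo 0 1)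
    (ha : Tendsto (fun N => (a N : ℝ) / N) atTop (𝓝 p₀))
    (hb : Tendsto (fun N => (b N : ℝ) / N) atTop (𝓝 (1 - p₀))) {δ : ℝ} (hδ : 0 < δ) :
    ∀ᶠ N in atTop, a N ≠ 0 ∧ b N ≠ 0 ∧ |(a N / (a N + b N) : ℝ) - p₀| < δ := by
  have hq : Tendsto (fun N => (a N : ℝ) / (a N + b N)) atTop (𝓝 p₀) := by
    have h := ha.div (ha.add hb) (by simp)
    rw [add_sub_cancel, div_one] at h
    refine h.congr' ?_
    filter_upwards [eventually_ne_atTop 0] with N hN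
    simp only [Pi.div_apply, ← add_div]
    exact div_div_div_cancel_right₀ (by exact_mod_cast hN) _ _
  filter_upwards [ha.eventually_ne hp₀.1.ne', hb.eventually_ne (sub_pos.2 hp₀.2).ne',
    Metric.tendsto_nhds.1 hq δ hδ] with N haN hbN hqN
  exact ⟨fun h => haN (by simp [h]), fun h => hbN (by simp [h]), hqN⟩

lemma tendsto_exp_neg_mul_add_mul
    (ha : Tendsto (fun N => (a N : ℝ) / N) atTop (𝓝 p₀))
    (hb : Tendsto (fun N => (b N : ℝ) / N) atTop (𝓝 (1 - p₀)))
    (hu : Tendsto (fun N => (u N : ℝ) / N) atTop (𝓝 0)) {η : ℝ} (hη : 0 < η) (C : ℝ) :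
    Tendsto (fun N => exp (-((a N + b N) * η + u N * C))) atTop (𝓝 0) := by
  refine tendsto_exp_neg_atTop_nhds_zero.comp (tendsto_atTop_of_tendsto_div_natCast hη ?_)
  have h := ((ha.add hb).mul_const η).add (hu.mul_const C)
  rw [add_sub_cancel, one_mul, zero_mul, add_zero] at h
  exact h.congr fun N => by ring

theorem tendsto_posterior_of_binomial_sandwich (hp₀ : p₀ ∈ Set.Ioo 0 1)
    {π₀ : Measure ℝ} [IsFiniteMeasure π₀] (hsupp : ∀ᵐ p ∂π₀, p ∈ Set.Icc (0 : ℝ) 1)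
    (hpos : ∀ ε > 0, 0 < π₀ {p : ℝ | |p - p₀| < ε})
    (ha : Tendsto (fun N => (a N : ℝ) / N) atTop (𝓝 p₀))
    (hb : Tendsto (fun N => (b N : ℝ) / N) atTop (𝓝 (1 - p₀)))
    (hu : Tendsto (fun N => (u N : ℝ) / N) atTop (𝓝 0))
    {f : ℕ → ℝ → ℝ} (hf : ∀ N, Integrable (f N) π₀)
    (hf_ge : ∀ N, ∀ p ∈ Set.Icc (0 : ℝ) 1, p ^ a N * (1 - p) ^ (b N + u N) ≤ f N p)
    (hf_le : ∀ N, ∀ p ∈ Set.Icc (0 : ℝ) 1, f N p ≤ p ^ a N * (1 - p) ^ b N)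
    {ε : ℝ} (hε : 0 < ε) :
    Tendsto (fun N => (∫ p in {p : ℝ | |p - p₀| < ε}, f N p ∂π₀) / ∫ p, f N p ∂π₀)
      atTop (𝓝 1) := by
  set m : ℕ → ℝ := fun N => a N + b N
  set M : ℕ → ℝ := fun N => (a N / m N) ^ a N * (1 - a N / m N) ^ b N
  set η := ε ^ 2 / 16
  obtain ⟨r, hr, hnear⟩ := exists_mul_exp_le_pow_mul_one_sub_pow hp₀ (by positivity : 0 < η)
  set c := (1 - p₀) / 2 with hc_def
  have hc : 0 < c := by linarith [hp₀.2]
  set δ := min r (ε / 2)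
  have hδ : 0 < δ := by positivity
  set κ : ℕ → ℝ := fun N => exp (-(m N * η + u N * log c))
  have hκ : Tendsto κ atTop (𝓝 0) := tendsto_exp_neg_mul_add_mul ha hb hu (by positivity) _
  have hbounds : ∀ᶠ N in atTop, 0 < c ^ u N * (M N * exp (-(m N * η))) ∧
      (∀ p ∈ {p : ℝ | |p - p₀| < δ}, c ^ u N * (M N * exp (-(m N * η))) ≤ f N p) ∧
      ∀ᵐ p ∂π₀, p ∉ {p : ℝ | |p - p₀| < ε} →
        f N p ≤ κ N * (c ^ u N * (M N * exp (-(m N * η)))) := by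
    filter_upwards [eventually_ne_zero_and_abs_sub_lt hp₀ ha hb hδ] with N ⟨haN, hbN, hqN⟩
    have hq := div_add_mem_Ioo haN hbN
    have hM : 0 < M N := mul_pos (pow_pos hq.1 _) (pow_pos (sub_pos.2 hq.2) _)
    refine ⟨by positivity, fun p hp => ?_, ?_⟩
    · obtain ⟨hpI, hle⟩ := hnear (u N) haN hbN (hqN.trans_le (min_le_left _ _))
        ((show |p - p₀| < δ from hp).trans_le (min_le_left _ _))
      exact hle.trans (hf_ge N p hpI)
    · filter_upwards [hsupp] with p hp hpA
      have hexp : exp (-(m N * η + u N * log c)) * exp (u N * log c) * exp (-(m N * η)) =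
          exp (-(m N * (ε ^ 2 / 8))) := by
        rw [← exp_add, ← exp_add]
        congr 1
        ring
      calc f N p ≤ p ^ a N * (1 - p) ^ b N := hf_le N p hp
        _ ≤ M N * exp (-(m N * (ε ^ 2 / 8))) := pow_mul_one_sub_pow_le_of_le_abs_sub haN hbN hp
            (hqN.le.trans (min_le_right _ _)) (not_lt.1 hpA)
        _ = κ N * (c ^ u N * (M N * exp (-(m N * η)))) := by
            rw [← hexp, ← exp_log (pow_pos hc (u N)), log_pow]
            ring
  refine tendsto_setIntegral_div_integral_of_le_mul
    (measurableSet_lt (by fun_prop) measurable_const)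
    (measurableSet_lt (by fun_prop) measurable_const) (fun p hp => ?_) (hpos δ hδ).ne' hf ?_
    hbounds hκ
  · exact (show |p - p₀| < δ from hp).trans_le ((min_le_right _ _).trans (by linarith))
  · intro N
    filter_upwards [hsupp] with p hp
    exact (pow_mul_one_sub_pow_nonneg _ _ hp).trans (hf_ge N p hp)

end BinomialSandwich

lemma prod_ite_ite_eq {ι : Type*} [Fintype ι] (c z : ι → Bool) (p x : ℝ) :
    ∏ i, (if c i then (if z i then p else 1 - p) else x) =
      p ^ #{i | c i ∧ z i} * (1 - p) ^ #{i | c i ∧ !z i} * x ^ #{i | !c i} := by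
  rw [Finset.prod_ite, Finset.prod_ite, Finset.filter_filter, Finset.filter_filter]
  simp [Finset.prod_const]

lemma survival_factor_mem_Icc {p r : ℝ} (hp : p ∈ Set.Icc 0 1) (hr : r ∈ Set.Icc 0 1) :
    1 - r * p ∈ Set.Icc (1 - p) 1 :=
  ⟨by nlinarith [hp.1, hr.2], by nlinarith [hp.1, hr.1]⟩

lemma prod_ite_one_sub_mul_mem_Icc {ι : Type*} [Fintype ι] (c z : ι → Bool) (r : ι → ℝ)
    (hr : ∀ i, r i ∈ Set.Icc 0 1) {p : ℝ} (hp : p ∈ Set.Icc 0 1) :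
    ∏ i, (if c i then (if z i then p else 1 - p) else 1 - r i * p) ∈
      Set.Icc (p ^ #{i | c i ∧ z i} * (1 - p) ^ (#{i | c i ∧ !z i} + #{i | !c i}))
        (p ^ #{i | c i ∧ z i} * (1 - p) ^ #{i | c i ∧ !z i}) := by
  have h1p : 0 ≤ 1 - p := sub_nonneg.2 hp.2
  constructor
  · rw [pow_add, ← mul_assoc, ← prod_ite_ite_eq]
    refine Finset.prod_le_prod (fun i _ => ?_) (fun i _ => ?_)
    · split_ifs <;> first | exact hp.1 | exact h1p
    · split_ifs
      exacts [le_rfl, le_rfl, (survival_factor_mem_Icc hp (hr i)).1]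
  · calc _ ≤ ∏ i, (if c i then (if z i then p else 1 - p) else 1) := by
          refine Finset.prod_le_prod (fun i _ => ?_) (fun i _ => ?_)
          · split_ifs
            exacts [hp.1, h1p, h1p.trans (survival_factor_mem_Icc hp (hr i)).1]
          · split_ifs
            exacts [le_rfl, le_rfl, (survival_factor_mem_Icc hp (hr i)).2]
      _ = _ := by rw [prod_ite_ite_eq, one_pow, mul_one]

lemma natCast_card_filter_not {ι : Type*} [Fintype ι] (c : ι → Bool) :
    (#{i | !c i} : ℝ) = ∑ i, if c i then 0 else 1 := by
  rw [Finset.natCast_card_filter]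
  exact Finset.sum_congr rfl fun i _ => by cases c i <;> rfl

lemma natCast_card_add_card_add_card {ι : Type*} [Fintype ι] (c z : ι → Bool) :
    (#{i | c i ∧ z i} + #{i | c i ∧ !z i} + #{i | !c i} : ℝ) = Fintype.card ι := by
  simp only [Finset.natCast_card_filter, ← Finset.sum_add_distrib]
  rw [← Finset.card_univ, Finset.cast_card]
  exact Finset.sum_congr rfl fun i _ => by cases c i <;> cases z i <;> norm_num

section Counts

variable {p₀ : ℝ} {y : ℕ → Bool} {β : (N : ℕ) → Fin N → Bool}

lemma card_filter_le_card_filter_and_add (N : ℕ) :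
    #{i : Fin N | y i} ≤ #{i : Fin N | β N i ∧ y i} + #{i | !β N i} := by
  classical
  refine (Finset.card_le_card fun i => ?_).trans (Finset.card_union_le _ _)
  cases h : β N i <;> simp [h]

lemma tendsto_card_filter_and
    (hy : Tendsto (fun n => (∑ i ∈ Finset.range n, if y i then (1 : ℝ) else 0) / n) atTop (𝓝 p₀))
    (hβ : Tendsto (fun N => (#{i : Fin N | !β N i} : ℝ) / N) atTop (𝓝 0)) :
    Tendsto (fun N => (#{i : Fin N | β N i ∧ y i} : ℝ) / N) atTop (𝓝 p₀) := by
  have hcard (N : ℕ) :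
      (#{i : Fin N | y i} : ℝ) = ∑ i ∈ Finset.range N, if y i then 1 else 0 := by
    rw [Finset.natCast_card_filter,
      Fin.sum_univ_eq_sum_range (fun i => if y i then (1 : ℝ) else 0)]
  simp only [← hcard] at hy
  have hlow := hy.sub hβ
  rw [sub_zero] at hlow
  refine tendsto_of_tendsto_of_tendsto_of_le_of_le hlow hy (fun N => ?_) (fun N => ?_)
  · rw [← sub_div]
    gcongr
    rw [sub_le_iff_le_add, ← Nat.cast_add]
    exact Nat.cast_le.2 (card_filter_le_card_filter_and_add N)
  · gcongr
    exact And.right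

lemma tendsto_card_filter_and_not
    (hy : Tendsto (fun N => (#{i : Fin N | β N i ∧ y i} : ℝ) / N) atTop (𝓝 p₀))
    (hβ : Tendsto (fun N => (#{i : Fin N | !β N i} : ℝ) / N) atTop (𝓝 0)) :
    Tendsto (fun N => (#{i : Fin N | β N i ∧ !y i} : ℝ) / N) atTop (𝓝 (1 - p₀)) := by
  have h := (tendsto_const_nhds (x := (1 : ℝ))).sub (hy.add hβ)
  rw [add_zero] at h
  refine h.congr' ?_
  filter_upwards [eventually_ne_atTop 0] with N hN
  have hsum := natCast_card_add_card_add_card (β N) (fun i => y i)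
  rw [Fintype.card_fin] at hsum
  field_simp
  linarith

end Counts

theorem tendsto_survival_posterior {p₀ : ℝ} (hp₀ : p₀ ∈ Set.Ioo 0 1) {y : ℕ → Bool}
    {β : (N : ℕ) → Fin N → Bool} {ρ : (N : ℕ) → Fin N → ℝ} (hρ : ∀ N i, ρ N i ∈ Set.Icc 0 1)
    {π₀ : Measure ℝ} [IsFiniteMeasure π₀] (hsupp : π₀ (Set.Icc (0 : ℝ) 1)ᶜ = 0)
    (hpos : ∀ ε > 0, 0 < π₀ {p : ℝ | |p - p₀| < ε})
    (hy : Tendsto (fun n => (∑ i ∈ Finset.range n, if y i then (1 : ℝ) else 0) / n) atTop (𝓝 p₀))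
    (hβ : Tendsto (fun N => (∑ i : Fin N, if β N i then (0 : ℝ) else 1) / N) atTop (𝓝 0))
    {ε : ℝ} (hε : 0 < ε) :
    Tendsto (fun N =>
        (∫ p in {p : ℝ | |p - p₀| < ε},
          ∏ i : Fin N, (if β N i then (if y i then p else 1 - p) else 1 - ρ N i * p) ∂π₀) /
        ∫ p in Set.Icc (0 : ℝ) 1,
          ∏ i : Fin N, (if β N i then (if y i then p else 1 - p) else 1 - ρ N i * p) ∂π₀)
      atTop (𝓝 1) := by
  have hae : ∀ᵐ p ∂π₀, p ∈ Set.Icc (0 : ℝ) 1 := ae_iff.2 hsupp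
  have hu : Tendsto (fun N => (#{i : Fin N | !β N i} : ℝ) / N) atTop (𝓝 0) := by
    simpa only [natCast_card_filter_not] using hβ
  have ha := tendsto_card_filter_and hy hu
  rw [Measure.restrict_eq_self_of_ae_mem hae]
  refine tendsto_posterior_of_binomial_sandwich hp₀ hae hpos ha
    (tendsto_card_filter_and_not ha hu) hu (fun N => ?_)
    (fun N p hp => (prod_ite_one_sub_mul_mem_Icc (β N) (fun i => y i) (ρ N) (hρ N) hp).1)
    (fun N p hp => (prod_ite_one_sub_mul_mem_Icc (β N) (fun i => y i) (ρ N) (hρ N) hp).2) hε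
  have hcont : Continuous fun p : ℝ =>
      ∏ i : Fin N, (if β N i then (if y i then p else 1 - p) else 1 - ρ N i * p) :=
    continuous_finsetProd _ fun i _ => by split_ifs <;> fun_prop
  rw [← Measure.restrict_eq_self_of_ae_mem hae]
  exact hcont.integrableOn_Icc

lemma identDistrib_of_measure_eq_true {Ω : Type*} [MeasurableSpace Ω] {P : Measure Ω}
    [IsProbabilityMeasure P] {Y Z : Ω → Bool} (hY : Measurable Y) (hZ : Measurable Z)
    (h : P {ω | Y ω = true} = P {ω | Z ω = true}) : IdentDistrib Y Z P P := by
  refine ⟨hY.aemeasurable, hZ.aemeasurable, Measure.ext_iff_singleton.2 fun v => ?_⟩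
  rw [Measure.map_apply hY (measurableSet_singleton v),
    Measure.map_apply hZ (measurableSet_singleton v)]
  cases v
  · have hcompl : ∀ X : Ω → Bool, X ⁻¹' {false} = {ω | X ω = true}ᶜ := fun X => by ext; simp
    rw [hcompl, hcompl, prob_compl_eq_one_sub (measurableSet_eq_fun hY measurable_const),
      prob_compl_eq_one_sub (measurableSet_eq_fun hZ measurable_const), h]
  · exact h

theorem ae_tendsto_frequency {Ω : Type*} [MeasurableSpace Ω] {P : Measure Ω}
    [IsProbabilityMeasure P] {Y : ℕ → Ω → Bool} (hmeas : ∀ i, Measurable (Y i))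
    (hindep : iIndepFun Y P) (hdist : ∀ i, P {ω | Y i ω = true} = P {ω | Y 0 ω = true}) :
    ∀ᵐ ω ∂P, Tendsto (fun n => (∑ i ∈ Finset.range n, if Y i ω then (1 : ℝ) else 0) / n)
      atTop (𝓝 (P.real {ω | Y 0 ω = true})) := by
  set g : Bool → ℝ := fun v => if v then 1 else 0
  have hg : Measurable g := .of_discrete
  have hY₀ : MeasurableSet {ω | Y 0 ω = true} := measurableSet_eq_fun (hmeas 0) measurable_const
  have hX : g ∘ Y 0 = {ω | Y 0 ω = true}.indicator 1 := by
    ext ω; cases h : Y 0 ω <;> simp [g, h]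
  have hint : Integrable (g ∘ Y 0) P := by
    rw [hX]; exact (integrable_const 1).indicator hY₀
  have h := strong_law_ae_real (fun i => g ∘ Y i) hint
    (fun i j hij => (hindep.indepFun hij).comp hg hg)
    (fun i => (identDistrib_of_measure_eq_true (hmeas i) (hmeas 0) (hdist i)).comp hg)
  rwa [hX, integral_indicator_one hY₀] at h

theorem stmt_8_general {Ω : Type*} [MeasurableSpace Ω] (P : Measure Ω) [IsProbabilityMeasure P]
    (p₀ : ℝ) (hp₀ : p₀ ∈ Set.Ioo (0:ℝ) 1)
    (Y : ℕ → Ω → Bool)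
    (hY_meas : ∀ i, Measurable (Y i))
    (hY_indep : ProbabilityTheory.iIndepFun Y P)
    (hY_dist : ∀ i, P {ω | Y i ω = true} = ENNReal.ofReal p₀)
    (b : (N : ℕ) → Fin N → Ω → Bool)
    (hb_pending : ∀ᵐ ω ∂P,
      Tendsto (fun N => (∑ i : Fin N, (if b N i ω then (0:ℝ) else 1)) / N)
        atTop (nhds 0))
    (ρ : (N : ℕ) → Fin N → ℝ) (hρ : ∀ N i, ρ N i ∈ Set.Icc (0:ℝ) 1)
    (π₀ : Measure ℝ) [IsProbabilityMeasure π₀]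
    (hπ₀_supp : π₀ (Set.Icc (0:ℝ) 1)ᶜ = 0)
    (hπ₀_pos : ∀ ε > 0, 0 < π₀ {p : ℝ | |p - p₀| < ε})
    (L : ℕ → ℝ → Ω → ℝ)
    (hL : ∀ N p ω, L N p ω =
      ∏ i : Fin N,
        (if b N i ω then (if Y i ω then p else 1 - p) else (1 - ρ N i * p))) :
    ∀ᵐ ω ∂P, ∀ ε > 0,
      Tendsto (fun N =>
          (∫ p in {p : ℝ | |p - p₀| < ε}, L N p ω ∂π₀) /
            (∫ p in Set.Icc (0:ℝ) 1, L N p ω ∂π₀))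
        atTop (nhds 1) := by
  have hfreq : P.real {ω | Y 0 ω = true} = p₀ := by
    rw [measureReal_def, hY_dist 0, ENNReal.toReal_ofReal hp₀.1.le]
  filter_upwards [ae_tendsto_frequency hY_meas hY_indep (fun i => by rw [hY_dist, hY_dist]),
    hb_pending] with ω hy hβ ε hε
  rw [hfreq] at hy
  simp only [hL]
  exact tendsto_survival_posterior hp₀ hρ hπ₀_supp hπ₀_pos hy hβ hε

/-- Stochastic version of Lemma 5.1(1): almost-sure posterior consistency of the
toxicity probability under the random survival likelihood, for i.i.d.
Bernoulli(p₀) outcomes with a vanishing fraction of pending outcomes. -/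
theorem stmt_8 {Ω : Type*} [MeasurableSpace Ω] (P : Measure Ω) [IsProbabilityMeasure P]
    (p₀ : ℝ) (hp₀ : p₀ ∈ Set.Ioo (0:ℝ) 1)
    (Y : ℕ → Ω → Bool)
    (hY_meas : ∀ i, Measurable (Y i))
    (hY_indep : ProbabilityTheory.iIndepFun Y P)
    (hY_dist : ∀ i, P {ω | Y i ω = true} = ENNReal.ofReal p₀)
    (b : (N : ℕ) → Fin N → Ω → Bool)
    (hb_meas : ∀ N i, Measurable (b N i))
    (hb_pending : ∀ᵐ ω ∂P,
      Tendsto (fun N => (∑ i : Fin N, (if b N i ω then (0:ℝ) else 1)) / N)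
        atTop (nhds 0))
    (ρ : (N : ℕ) → Fin N → ℝ) (hρ : ∀ N i, ρ N i ∈ Set.Icc (0:ℝ) 1)
    (π₀ : Measure ℝ) [IsProbabilityMeasure π₀]
    (hπ₀_supp : π₀ (Set.Icc (0:ℝ) 1)ᶜ = 0)
    (hπ₀_pos : ∀ ε > 0, 0 < π₀ {p : ℝ | |p - p₀| < ε})
    (L : ℕ → ℝ → Ω → ℝ)
    (hL : ∀ N p ω, L N p ω =
      ∏ i : Fin N,
        (if b N i ω then (if Y i ω then p else 1 - p) else (1 - ρ N i * p))) :
    ∀ᵐ ω ∂P, ∀ ε > 0,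
      Tendsto (fun N =>
          (∫ p in {p : ℝ | |p - p₀| < ε}, L N p ω ∂π₀) /
            (∫ p in Set.Icc (0:ℝ) 1, L N p ω ∂π₀))
        atTop (nhds 1) :=
  stmt_8_general P p₀ hp₀ Y hY_meas hY_indep hY_dist b hb_pending ρ hρ π₀ hπ₀_supp hπ₀_pos L hL
end

section
/- Let n, m be natural numbers and let ρ₁,…,ρ_r, ρ'₁,…,ρ'_r ∈ [0,1] satisfy ρ_i ≤ ρ'_i for all i ∈ {1,…,r}, and assume n > 0 or m > 0 or ρ_i > 0 for some i. Define ℓ(p; ρ₁,…,ρ_r) = n/p − m/(1−p) − Σ_{i=1}^r ρ_i/(1 − ρ_i p) for p ∈ (0,1). If p₁, p₂ ∈ (0,1) satisfy ℓ(p₁; ρ₁,…,ρ_r) = 0 and ℓ(p₂; ρ'₁,…,ρ'_r) = 0, then p₂ ≤ p₁. -/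
/-- Core of the interval-coherence result (Appendix C.2): if p₁ and p₂ are roots
in (0,1) of the score function ℓ of the survival likelihood with weights ρ and
ρ' respectively, and each pending patient's weight can only increase (ρᵢ ≤ ρ'ᵢ),
then the maximum likelihood estimate cannot increase: p₂ ≤ p₁. -/
theorem stmt_12 (n m : ℕ) (r : ℕ) (ρ ρ' : Fin r → ℝ)
    (hρ : ∀ i, ρ i ∈ Set.Icc (0:ℝ) 1) (hρ' : ∀ i, ρ' i ∈ Set.Icc (0:ℝ) 1)
    (hle : ∀ i, ρ i ≤ ρ' i)
    (hpos : 0 < n ∨ 0 < m ∨ ∃ i, 0 < ρ i)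
    (p₁ p₂ : ℝ) (hp₁ : p₁ ∈ Set.Ioo (0:ℝ) 1) (hp₂ : p₂ ∈ Set.Ioo (0:ℝ) 1)
    (h₁ : (n : ℝ) / p₁ - (m : ℝ) / (1 - p₁) - ∑ i, ρ i / (1 - ρ i * p₁) = 0)
    (h₂ : (n : ℝ) / p₂ - (m : ℝ) / (1 - p₂) - ∑ i, ρ' i / (1 - ρ' i * p₂) = 0) :
    p₂ ≤ p₁ := by
  obtain ⟨hp1p, hp1l⟩ := hp₁
  obtain ⟨hp2p, hp2l⟩ := hp₂
  by_contra hlt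
  push_neg at hlt
  have hd : ∀ (c p : ℝ), c ∈ Set.Icc (0:ℝ) 1 → 0 < p → p < 1 → 0 < 1 - c * p := by
    rintro c p ⟨h0, h1⟩ hp0 hp1
    nlinarith
  -- Σ ρᵢ/(1-ρᵢp₂) ≤ Σ ρ'ᵢ/(1-ρ'ᵢp₂)
  have hS : ∑ i, ρ i / (1 - ρ i * p₂) ≤ ∑ i, ρ' i / (1 - ρ' i * p₂) := by
    apply Finset.sum_le_sum
    intro i _
    have d1 := hd (ρ i) p₂ (hρ i) hp2p hp2l
    have d2 := hd (ρ' i) p₂ (hρ' i) hp2p hp2l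
    rw [div_le_div_iff₀ d1 d2]
    nlinarith [hle i, (hρ i).1, hp2p.le]
  have h2' : 0 ≤ (n:ℝ)/p₂ - (m:ℝ)/(1-p₂) - ∑ i, ρ i / (1 - ρ i * p₂) := by linarith
  -- weak monotonicity of each piece in p
  have hterm : ∀ i ∈ Finset.univ, ρ i / (1 - ρ i * p₁) ≤ ρ i / (1 - ρ i * p₂) := by
    intro i _
    have d1 := hd (ρ i) p₁ (hρ i) hp1p hp1l
    have d2 := hd (ρ i) p₂ (hρ i) hp2p hp2l
    rw [div_le_div_iff₀ d1 d2]
    nlinarith [mul_nonneg (mul_nonneg (hρ i).1 (hρ i).1) (sub_nonneg.2 hlt.le)]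
  have hSmono : ∑ i, ρ i / (1 - ρ i * p₁) ≤ ∑ i, ρ i / (1 - ρ i * p₂) :=
    Finset.sum_le_sum hterm
  have hn : (n:ℝ)/p₂ ≤ (n:ℝ)/p₁ := by
    apply div_le_div_of_nonneg_left (Nat.cast_nonneg n) hp1p hlt.le
  have hm : (m:ℝ)/(1-p₁) ≤ (m:ℝ)/(1-p₂) := by
    have : (0:ℝ) < 1 - p₂ := by linarith
    apply div_le_div_of_nonneg_left (Nat.cast_nonneg m) this (by linarith)
  -- strictness
  rcases hpos with hn0 | hm0 | ⟨i, hi⟩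
  · have hns : (n:ℝ)/p₂ < (n:ℝ)/p₁ := by
      apply div_lt_div_of_pos_left (by exact_mod_cast hn0) hp1p hlt
    linarith
  · have hms : (m:ℝ)/(1-p₁) < (m:ℝ)/(1-p₂) := by
      have : (0:ℝ) < 1 - p₂ := by linarith
      apply div_lt_div_of_pos_left (by exact_mod_cast hm0) this (by linarith)
    linarith
  · have hSs : ∑ j, ρ j / (1 - ρ j * p₁) < ∑ j, ρ j / (1 - ρ j * p₂) := by
      apply Finset.sum_lt_sum hterm
      refine ⟨i, Finset.mem_univ i, ?_⟩
      have d1 := hd (ρ i) p₁ (hρ i) hp1p hp1l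
      have d2 := hd (ρ i) p₂ (hρ i) hp2p hp2l
      rw [div_lt_div_iff₀ d1 d2]
      nlinarith [mul_pos (mul_pos hi hi) (sub_pos.2 hlt)]
    linarith
end
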